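/- The map from reference coordinates to physical coordinates for a bilinear quadrilateral element, x(r,s) = a₀ + a₁ r + a₂ s + a₃ r s (componentwise in ℝ²), has Jacobian determinant that is an affine function of (r, s); hence if the Jacobian determinant is positive at the four corners (±1, ±1) of the reference square, it is positive on the whole reference square [-1,1]². -/
import Mathlib


/-- 2×2 determinant of two vectors in ℝ². -/
def det2 (u v : ℝ × ℝ) : ℝ := u.1 * v.2 - u.2 * v.1

/-- The Jacobian determinant of the bilinear quadrilateral map
x(r,s) = a₀ + r a₁ + s a₂ + rs a₃, namely J(r,s) = det[a₁ + s a₃, a₂ + r a₃],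
is affine in (r,s); hence positivity at the four corners of the reference square
implies positivity on all of [-1,1]². -/
theorem bilinear_jacobian_affine_positive
    (a₀ a₁ a₂ a₃ : ℝ × ℝ)
    (x : ℝ → ℝ → ℝ × ℝ)
    (hx : x = fun r s => a₀ + r • a₁ + s • a₂ + (r * s) • a₃)
    (J : ℝ → ℝ → ℝ)
    (hJ : J = fun r s => det2 (a₁ + s • a₃) (a₂ + r • a₃)) :
    (∃ c₀ c₁ c₂ : ℝ, ∀ r s, J r s = c₀ + c₁ * r + c₂ * s) ∧
    ((0 < J 1 1 ∧ 0 < J 1 (-1) ∧ 0 < J (-1) 1 ∧ 0 < J (-1) (-1)) →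
      ∀ r ∈ Set.Icc (-1 : ℝ) 1, ∀ s ∈ Set.Icc (-1 : ℝ) 1, 0 < J r s) := by
  subst hJ
  have key : ∀ r s : ℝ, det2 (a₁ + s • a₃) (a₂ + r • a₃) =
      det2 a₁ a₂ + det2 a₁ a₃ * r + det2 a₃ a₂ * s := by
    intro r s
    simp only [det2, Prod.fst_add, Prod.snd_add, Prod.smul_fst, Prod.smul_snd, smul_eq_mul]
    ring
  constructor
  · exact ⟨det2 a₁ a₂, det2 a₁ a₃, det2 a₃ a₂, key⟩
  · rintro ⟨h1, h2, h3, h4⟩ r ⟨hr1, hr2⟩ s ⟨hs1, hs2⟩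
    simp only [key] at h1 h2 h3 h4 ⊢
    set c₀ := det2 a₁ a₂ with hc0
    set c₁ := det2 a₁ a₃ with hc1
    set c₂ := det2 a₃ a₂ with hc2
    have hb : |c₁| + |c₂| < c₀ := by
      rcases abs_cases c₁ with ⟨e1, _⟩ | ⟨e1, _⟩ <;>
        rcases abs_cases c₂ with ⟨e2, _⟩ | ⟨e2, _⟩ <;> rw [e1, e2] <;> linarith
    have hr : -|c₁| ≤ c₁ * r := by
      have : |c₁ * r| ≤ |c₁| := by
        rw [abs_mul]
        calc |c₁| * |r| ≤ |c₁| * 1 := by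
              apply mul_le_mul_of_nonneg_left _ (abs_nonneg _)
              rw [abs_le]; exact ⟨hr1, hr2⟩
          _ = |c₁| := mul_one _
      linarith [neg_abs_le (c₁ * r), (abs_le.mp this).1]
    have hs : -|c₂| ≤ c₂ * s := by
      have : |c₂ * s| ≤ |c₂| := by
        rw [abs_mul]
        calc |c₂| * |s| ≤ |c₂| * 1 := by
              apply mul_le_mul_of_nonneg_left _ (abs_nonneg _)
              rw [abs_le]; exact ⟨hs1, hs2⟩
          _ = |c₂| := mul_one _
      linarith [(abs_le.mp this).1]
    linarith
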